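/- arXiv:1301.7215 — 8 statements merged into one kernel-verified Lean document; each statement's English description precedes it below -/
import Mathlib

section
/- Let n ≥ 2 and 0 ≤ k ≤ n−1. For every polynomial f ∈ MvPolynomial (Fin n × Fin n) ℂ, if f vanishes at every diagonalizable matrix A ∈ Matrix (Fin n) (Fin n) ℂ that is k-degenerate, then f vanishes at every k-degenerate matrix A ∈ Matrix (Fin n) (Fin n) ℂ. (I.e., the diagonalizable matrices form a Zariski dense subset of the variety of k-degenerate complex n×n matrices.) -/
/-!
Write the minimal polynomial of `A` as `∏ j < d, (X - c j)` with `d ≤ n - k`. Along the flag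
`W j = ker ∏ l < j, (A - c l)`, the matrix `A` acts on `W (j + 1) / W j` as the scalar `c j`.
Choose `D` preserving the flag and acting on `W (j + 1) / W j` as `j + 1`. Then `A + t • D` is
annihilated by `∏ j < d, (X - (c j + t (j + 1)))`, whose roots are distinct for all but finitely
many `t`; for those `t` the matrix `A + t • D` is diagonalizable and `k`-degenerate, so `f`
vanishes there. Restricted to the line `t ↦ A + t • D`, `f` is a one-variable polynomial with
infinitely many roots, hence zero, and `t = 0` gives `f A = 0`.
-/

open Polynomial

theorem minpoly_natDegree_le_of_not_linearIndependent_pow {K A : Type*} [Field K] [Ring A]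
    [Algebra K A] {x : A} {m : ℕ}
    (h : ¬ LinearIndependent K (fun r : Fin (m + 1) => x ^ (r : ℕ))) :
    (minpoly K x).natDegree ≤ m := by
  by_contra! hm
  exact h ((linearIndependent_pow x).comp (Fin.castLE hm) (Fin.castLE_injective hm))

theorem not_linearIndependent_pow_of_aeval_eq_zero {K A : Type*} [Field K] [Ring A]
    [Algebra K A] {x : A} {m : ℕ} {p : K[X]} (hp : p.Monic) (hdeg : p.natDegree ≤ m)
    (hx : aeval x p = 0) :
    ¬ LinearIndependent K (fun r : Fin (m + 1) => x ^ (r : ℕ)) := by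
  rw [Fintype.not_linearIndependent_iff]
  refine ⟨fun r => p.coeff r, ?_, ⟨p.natDegree, by omega⟩, by simp [hp.coeff_natDegree]⟩
  rw [Fin.sum_univ_eq_sum_range (fun i => p.coeff i • x ^ i), ← aeval_eq_sum_range' (by omega),
    hx]

theorem Polynomial.Splits.exists_eq_prod_range_X_sub_C {K : Type*} [Field K] {p : K[X]}
    (hs : p.Splits) (hp : p.Monic) :
    ∃ c : ℕ → K, p = ∏ j ∈ Finset.range p.natDegree, (X - C (c j)) := by
  set L := p.roots.toList with hL
  refine ⟨fun j => L.getD j 0, ?_⟩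
  have hlen : L.length = p.natDegree := by simp [L, hs.natDegree_eq_card_roots]
  conv_lhs => rw [hs.eq_prod_roots_of_monic hp, ← Multiset.coe_toList p.roots, ← hL]
  rw [Multiset.map_coe, Multiset.prod_coe, ← Fin.prod_univ_fun_getElem, ← hlen,
    ← Fin.prod_univ_eq_prod_range (fun j => X - C (L.getD j 0))]
  simp only [List.getD_eq_getElem?_getD, Fin.is_lt, getElem?_pos, Option.getD_some]

namespace Module.End

section CommRing

variable {R M : Type*} [CommRing R] [AddCommGroup M] [Module R M]

theorem aeval_X_sub_C_apply (ψ : Module.End R M) (c : R) (x : M) :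
    aeval ψ (X - C c) x = ψ x - c • x := by
  simp [Module.algebraMap_end_apply]

theorem aeval_prod_range_X_sub_C_apply_eq_zero (ψ : Module.End R M) {W : ℕ → Submodule R M}
    (hW0 : W 0 = ⊥) (c : ℕ → R) {d : ℕ}
    (h : ∀ j < d, ∀ x ∈ W (j + 1), ψ x - c j • x ∈ W j) :
    ∀ x ∈ W d, aeval ψ (∏ j ∈ Finset.range d, (X - C (c j))) x = 0 := by
  induction d with
  | zero => simp [hW0]
  | succ d ih =>
    intro x hx
    rw [Finset.prod_range_succ, map_mul, Module.End.mul_apply, aeval_X_sub_C_apply]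
    exact ih (fun j hj => h j (by omega)) _ (h d d.lt_succ_self x hx)

noncomputable def kerFlag (ψ : Module.End R M) (c : ℕ → R) (j : ℕ) : Submodule R M :=
  LinearMap.ker (aeval ψ (∏ l ∈ Finset.range j, (X - C (c l))))

theorem kerFlag_zero (ψ : Module.End R M) (c : ℕ → R) : kerFlag ψ c 0 = ⊥ := by
  simp [kerFlag, Module.End.one_eq_id]

theorem sub_smul_mem_kerFlag (ψ : Module.End R M) (c : ℕ → R) {j : ℕ} {x : M}
    (hx : x ∈ kerFlag ψ c (j + 1)) : ψ x - c j • x ∈ kerFlag ψ c j := by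
  rw [kerFlag, LinearMap.mem_ker, ← aeval_X_sub_C_apply, ← Module.End.mul_apply, ← map_mul,
    ← Finset.prod_range_succ]
  exact hx

theorem monotone_kerFlag (ψ : Module.End R M) (c : ℕ → R) : Monotone (kerFlag ψ c) := by
  refine monotone_nat_of_le_succ fun j x hx => ?_
  rw [kerFlag, LinearMap.mem_ker, Finset.prod_range_succ, mul_comm, map_mul,
    Module.End.mul_apply, LinearMap.mem_ker.1 hx, map_zero]

theorem kerFlag_eq_top {ψ : Module.End R M} {c : ℕ → R} {d : ℕ}
    (h : aeval ψ (∏ j ∈ Finset.range d, (X - C (c j))) = 0) : kerFlag ψ c d = ⊤ := by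
  rw [kerFlag, h, LinearMap.ker_zero]

end CommRing

variable {K V : Type*} [Field K] [AddCommGroup V] [Module K V]

theorem _root_.Submodule.exists_retraction (W : Submodule K V) :
    ∃ P : Module.End K V, (∀ x, P x ∈ W) ∧ ∀ x ∈ W, P x = x := by
  obtain ⟨g, hg⟩ := W.subtype.exists_leftInverse_of_injective W.ker_subtype
  exact ⟨W.subtype ∘ₗ g, fun x => (g x).2,
    fun x hx => congrArg Subtype.val (LinearMap.congr_fun hg ⟨x, hx⟩)⟩

theorem exists_sub_smul_mem_of_monotone {W : ℕ → Submodule K V} (hW : Monotone W) (d : ℕ) :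
    ∃ D : Module.End K V, ∀ j < d, ∀ x ∈ W (j + 1), D x - ((j : K) + 1) • x ∈ W j := by
  choose P hPW hPid using fun i => Submodule.exists_retraction (W i)
  refine ⟨∑ i ∈ Finset.range d, (1 - P i), fun j hj x hx => ?_⟩
  have htail : ∀ i ∈ Finset.Ico (j + 1) d, (1 - P i) x = 0 := fun i hi => by
    rw [LinearMap.sub_apply, hPid i x (hW (Finset.mem_Ico.1 hi).1 hx), Module.End.one_apply,
      sub_self]
  have hD : (∑ i ∈ Finset.range d, (1 - P i)) x - ((j : K) + 1) • x
      = -∑ i ∈ Finset.range (j + 1), P i x := by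
    rw [LinearMap.sum_apply, ← Finset.sum_range_add_sum_Ico _ (by omega : j + 1 ≤ d),
      Finset.sum_eq_zero htail]
    simp [Finset.sum_sub_distrib, add_smul, Nat.cast_smul_eq_nsmul]
  rw [hD]
  exact neg_mem (Submodule.sum_mem _ fun i hi =>
    hW (Nat.lt_succ_iff.1 (Finset.mem_range.1 hi)) (hPW i x))

theorem exists_aeval_add_smul_prod_eq_zero {φ : Module.End K V} {c : ℕ → K} {d : ℕ}
    (h : aeval φ (∏ j ∈ Finset.range d, (X - C (c j))) = 0) :
    ∃ D : Module.End K V, ∀ t : K,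
      aeval (φ + t • D) (∏ j ∈ Finset.range d, (X - C (c j + t * ((j : K) + 1)))) = 0 := by
  obtain ⟨D, hD⟩ := exists_sub_smul_mem_of_monotone (monotone_kerFlag φ c) d
  refine ⟨D, fun t => LinearMap.ext fun x => ?_⟩
  refine aeval_prod_range_X_sub_C_apply_eq_zero _ (kerFlag_zero φ c) _ (fun j hj y hy => ?_) x
    (kerFlag_eq_top h ▸ Submodule.mem_top)
  have hsplit : (φ + t • D) y - (c j + t * ((j : K) + 1)) • y
      = (φ y - c j • y) + t • (D y - ((j : K) + 1) • y) := by
    simp only [LinearMap.add_apply, LinearMap.smul_apply]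
    module
  rw [hsplit]
  exact add_mem (sub_smul_mem_kerFlag φ c hy) (Submodule.smul_mem _ t (hD j hj y hy))

end Module.End

namespace Matrix

variable {n K : Type*} [Fintype n] [DecidableEq n] [Field K]

def IsDiagonalizable (B : Matrix n n K) : Prop :=
  ∃ P : (Matrix n n K)ˣ, ∃ d : n → K, B = (P : Matrix n n K) * diagonal d *
    ((P⁻¹ : (Matrix n n K)ˣ) : Matrix n n K)

theorem isDiagonalizable_of_iSup_eigenspace_eq_top {B : Matrix n n K}
    (h : ⨆ μ, Module.End.eigenspace (toLin' B) μ = ⊤) : B.IsDiagonalizable := by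
  have hspan :
      ⊤ ≤ Submodule.span K (⋃ μ, (Module.End.eigenspace (toLin' B) μ : Set (n → K))) := by
    rw [← Submodule.iSup_eq_span, h]
  set b₀ := Module.Basis.ofSpan hspan
  set b := b₀.reindex (b₀.indexEquiv (Pi.basisFun K n))
  have hb : ∀ i, ∃ μ, b i ∈ Module.End.eigenspace (toLin' B) μ := fun i =>
    Set.mem_iUnion.1 (Module.Basis.ofSpan_subset hspan (b₀.range_reindex _ ▸ ⟨i, rfl⟩))
  choose d hd using hb
  set e := Pi.basisFun K n
  let P : (Matrix n n K)ˣ :=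
    ⟨e.toMatrix b, b.toMatrix e, e.toMatrix_mul_toMatrix_flip b, b.toMatrix_mul_toMatrix_flip e⟩
  have hBP : B * (P : Matrix n n K) = P * diagonal d := by
    ext i j
    have := congrFun (Module.End.mem_eigenspace_iff.1 (hd j)) i
    rw [mul_diagonal]
    simpa [P, e, Module.Basis.toMatrix_apply, mul_comm, mul_apply, mulVec, dotProduct] using this
  refine ⟨P, d, ?_⟩
  rw [← hBP, mul_assoc, Units.mul_inv, mul_one]

theorem isDiagonalizable_of_squarefree_aeval_eq_zero [IsAlgClosed K] {B : Matrix n n K}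
    {p : K[X]} (hp : Squarefree p) (h : aeval B p = 0) : B.IsDiagonalizable := by
  refine isDiagonalizable_of_iSup_eigenspace_eq_top
    (Module.End.IsSemisimple.iSup_eigenspace_eq_top
      (Module.End.isSemisimple_of_squarefree_aeval_eq_zero hp ?_))
  change aeval (toLinAlgEquiv' B) p = 0
  rw [aeval_algEquiv, AlgHom.comp_apply, h, map_zero]

theorem exists_aeval_add_smul_prod_eq_zero {A : Matrix n n K} {c : ℕ → K} {d : ℕ}
    (h : aeval A (∏ j ∈ Finset.range d, (X - C (c j))) = 0) :
    ∃ D : Matrix n n K, ∀ t : K,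
      aeval (A + t • D) (∏ j ∈ Finset.range d, (X - C (c j + t * ((j : K) + 1)))) = 0 := by
  have h' : aeval (toLinAlgEquiv' A) (∏ j ∈ Finset.range d, (X - C (c j))) = 0 := by
    rw [aeval_algEquiv, AlgHom.comp_apply, h, map_zero]
  obtain ⟨D, hD⟩ := Module.End.exists_aeval_add_smul_prod_eq_zero h'
  refine ⟨toLinAlgEquiv'.symm D, fun t => toLinAlgEquiv'.injective ?_⟩
  rw [← AlgEquiv.coe_toAlgHom, ← AlgHom.comp_apply, ← aeval_algEquiv]
  simpa using hD t

end Matrix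

theorem Set.finite_setOf_not_injOn_add_mul {ι K : Type*} [Field K] (a b : ι → K) {s : Finset ι}
    (hb : Set.InjOn b s) : {t : K | ¬ Set.InjOn (fun i => a i + t * b i) s}.Finite := by
  refine ((s ×ˢ s).finite_toSet.image fun p => (a p.2 - a p.1) / (b p.1 - b p.2)).subset ?_
  intro t ht
  simp only [Set.InjOn, not_forall] at ht
  obtain ⟨i, hi, j, hj, hij, hne⟩ := ht
  have hbij : b i - b j ≠ 0 := sub_ne_zero.2 fun h => hne (hb hi hj h)
  refine ⟨(i, j), by simpa using ⟨hi, hj⟩, ?_⟩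
  rw [div_eq_iff hbij]
  linear_combination -hij

theorem MvPolynomial.eval_eq_zero_of_eval_add_mul_eq_zero {K σ : Type*} [Field K] [Infinite K]
    (f : MvPolynomial σ K) (x y : σ → K) {S : Set K} (hS : S.Finite)
    (h : ∀ t ∉ S, MvPolynomial.eval (fun i => x i + t * y i) f = 0) :
    MvPolynomial.eval x f = 0 := by
  set g : K[X] :=
    eval₂ Polynomial.C (fun i => Polynomial.C (x i) + Polynomial.X * Polynomial.C (y i)) f
  have hg : ∀ t, g.eval t = eval (fun i => x i + t * y i) f := by
    intro t
    simp only [g, polynomial_eval_eval₂]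
    have hC : (Polynomial.evalRingHom t).comp Polynomial.C = RingHom.id K := by ext; simp
    simp only [hC, Polynomial.eval_add, Polynomial.eval_mul, Polynomial.eval_C, Polynomial.eval_X,
      mul_comm t]
    rfl
  have hg0 : g = 0 := g.eq_zero_of_infinite_isRoot <|
    hS.infinite_compl.mono fun t ht => (hg t).trans (h t ht)
  simpa using (hg 0).symm.trans (congrArg (Polynomial.eval 0) hg0)

theorem stmt_0_general (n k : ℕ)
    (f : MvPolynomial (Fin n × Fin n) ℂ)
    (hvan : ∀ A : Matrix (Fin n) (Fin n) ℂ,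
      (∃ P : (Matrix (Fin n) (Fin n) ℂ)ˣ, ∃ d : Fin n → ℂ,
        A = (P : Matrix (Fin n) (Fin n) ℂ) * Matrix.diagonal d *
          ((P⁻¹ : (Matrix (Fin n) (Fin n) ℂ)ˣ) : Matrix (Fin n) (Fin n) ℂ)) →
      ¬ LinearIndependent ℂ (fun r : Fin (n - k + 1) => A ^ (r : ℕ)) →
      MvPolynomial.eval (fun p => A p.1 p.2) f = 0) :
    ∀ A : Matrix (Fin n) (Fin n) ℂ,
      ¬ LinearIndependent ℂ (fun r : Fin (n - k + 1) => A ^ (r : ℕ)) →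
      MvPolynomial.eval (fun p => A p.1 p.2) f = 0 := by
  intro A hA
  have hmonic : (minpoly ℂ A).Monic := minpoly.monic (Algebra.IsIntegral.isIntegral A)
  obtain ⟨c, hc⟩ := (IsAlgClosed.splits _).exists_eq_prod_range_X_sub_C hmonic
  obtain ⟨D, hD⟩ := Matrix.exists_aeval_add_smul_prod_eq_zero (hc ▸ minpoly.aeval ℂ A)
  have hdeg : (minpoly ℂ A).natDegree ≤ n - k :=
    minpoly_natDegree_le_of_not_linearIndependent_pow hA
  have hinj : Set.InjOn (fun j : ℕ => (j : ℂ) + 1) (Finset.range (minpoly ℂ A).natDegree) :=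
    fun i _ j _ hij => by simpa using hij
  refine MvPolynomial.eval_eq_zero_of_eval_add_mul_eq_zero f _ (fun p => D p.1 p.2)
    (Set.finite_setOf_not_injOn_add_mul c _ hinj) fun t ht => ?_
  have hdiag : (A + t • D).IsDiagonalizable :=
    Matrix.isDiagonalizable_of_squarefree_aeval_eq_zero
      (separable_prod_X_sub_C_iff'.2 (not_not.1 ht)).squarefree (hD t)
  have hdegen : ¬ LinearIndependent ℂ (fun r : Fin (n - k + 1) => (A + t • D) ^ (r : ℕ)) :=
    not_linearIndependent_pow_of_aeval_eq_zero (monic_prod_X_sub_C _ _)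
      (by rwa [natDegree_finsetProd_X_sub_C_eq_card, Finset.card_range]) (hD t)
  simpa only [Matrix.add_apply, Matrix.smul_apply, smul_eq_mul] using hvan _ hdiag hdegen

/-- The diagonalizable matrices form a Zariski dense subset of the variety of
`k`-degenerate complex `n × n` matrices: any polynomial vanishing on all
diagonalizable `k`-degenerate matrices vanishes on all `k`-degenerate matrices. -/
theorem stmt_0 (n k : ℕ) (hn : 2 ≤ n) (hk : k ≤ n - 1)
    (f : MvPolynomial (Fin n × Fin n) ℂ)
    (hvan : ∀ A : Matrix (Fin n) (Fin n) ℂ,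
      (∃ P : (Matrix (Fin n) (Fin n) ℂ)ˣ, ∃ d : Fin n → ℂ,
        A = (P : Matrix (Fin n) (Fin n) ℂ) * Matrix.diagonal d *
          ((P⁻¹ : (Matrix (Fin n) (Fin n) ℂ)ˣ) : Matrix (Fin n) (Fin n) ℂ)) →
      ¬ LinearIndependent ℂ (fun r : Fin (n - k + 1) => A ^ (r : ℕ)) →
      MvPolynomial.eval (fun p => A p.1 p.2) f = 0) :
    ∀ A : Matrix (Fin n) (Fin n) ℂ,
      ¬ LinearIndependent ℂ (fun r : Fin (n - k + 1) => A ^ (r : ℕ)) →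
      MvPolynomial.eval (fun p => A p.1 p.2) f = 0 :=
  stmt_0_general n k f hvan
end

section
/- Let n ≥ 2 and 0 ≤ k ≤ n−1. Let X be the generic n×n matrix over MvPolynomial (Fin n × Fin n) ℂ (its (i,j) entry is the variable indexed by (i,j)), and consider the (n−k+1) × n² matrix over this polynomial ring whose row indexed by r ∈ {0,1,…,n−k} lists the n² entries of X^r. Let J be the ideal generated by all (n−k+1)×(n−k+1) minors of this matrix (determinants of submatrices obtained by choosing n−k+1 of the n² columns). Then the radical of J equals the vanishing ideal of the set of k-degenerate matrices; that is, f lies in the radical of J if and only if f(A) = 0 for every k-degenerate A ∈ Matrix (Fin n) (Fin n) ℂ. -/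
/-!
By the Nullstellensatz the radical of `J` is the vanishing ideal of its zero locus, so it
suffices to identify that zero locus with the `k`-degenerate matrices. Evaluating the generic
matrix at `A` turns the generators of `J` into the maximal minors of the matrix whose rows
are the entries of `A ^ 0, …, A ^ (n - k)`, and a finite family of vectors is linearly
independent exactly when some maximal minor of its coordinate matrix is nonzero: a basis of
the column space extracted from the columns gives one.
-/

open Matrix MvPolynomial

theorem linearIndependent_iff_exists_det_ne_zero {K ι α : Type*} [Field K] [Fintype ι]
    [DecidableEq ι] [Fintype α] (v : ι → α → K) :
    LinearIndependent K v ↔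
      ∃ c : ι → α, Function.Injective c ∧ (of fun r s => v r (c s)).det ≠ 0 := by
  constructor
  · intro hv
    have hspan : Submodule.span K (Set.range (of v).col) = ⊤ := by
      apply Submodule.eq_top_of_finrank_eq
      rw [← rank_eq_finrank_span_cols, LinearIndependent.rank_matrix (M := of v) hv,
        Module.finrank_fintype_fun_eq_card]
    obtain ⟨κ, a, ha, hspan_a, hli⟩ := exists_linearIndependent' K (of v).col
    rw [hspan] at hspan_a
    let e : ι ≃ κ := (Pi.basisFun K ι).indexEquiv (Module.Basis.mk hli hspan_a.ge)
    refine ⟨a ∘ e, ha.comp e.injective, fun hdet => ?_⟩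
    have hcols : LinearIndependent K (of fun r s => v r (a (e s))).col := hli.comp e e.injective
    rw [linearIndependent_cols_iff_isUnit, isUnit_iff_isUnit_det] at hcols
    exact hcols.ne_zero hdet
  · rintro ⟨c, -, hdet⟩
    have hrows : LinearIndependent K (of fun r s => v r (c s)).row := by
      rw [linearIndependent_rows_iff_isUnit, isUnit_iff_isUnit_det]
      exact hdet.isUnit
    exact hrows.of_comp (LinearMap.funLeft K K c)

theorem map_eval_pow_of_eq_X {R n : Type*} [CommRing R] [Fintype n] [DecidableEq n]
    {X : Matrix n n (MvPolynomial (n × n) R)} (hX : ∀ i j, X i j = MvPolynomial.X (i, j))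
    (A : Matrix n n R) (r : ℕ) :
    (X ^ r).map (eval fun p => A p.1 p.2) = A ^ r := by
  have hXA : X.map (eval fun p => A p.1 p.2) = A := by
    ext i j
    simp [hX]
  rw [← RingHom.mapMatrix_apply, map_pow, RingHom.mapMatrix_apply, hXA]

theorem linearIndependent_uncurry_iff {K n ι : Type*} [Field K] (v : ι → Matrix n n K) :
    LinearIndependent K (fun r (p : n × n) => v r p.1 p.2) ↔ LinearIndependent K v :=
  (LinearEquiv.curry K K n n).symm.toLinearMap.linearIndependent_iff (LinearEquiv.ker _)

theorem mem_zeroLocus_span_det_pow_iff {K n : Type*} [Field K] [Fintype n] [DecidableEq n]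
    {X : Matrix n n (MvPolynomial (n × n) K)} (hX : ∀ i j, X i j = MvPolynomial.X (i, j))
    (m : ℕ) (A : Matrix n n K) :
    (fun p => A p.1 p.2) ∈ zeroLocus K (Ideal.span {d | ∃ c : Fin m → n × n,
      Function.Injective c ∧ d = (of fun r s : Fin m => (X ^ (r : ℕ)) (c s).1 (c s).2).det}) ↔
    ¬ LinearIndependent K (fun r : Fin m => A ^ (r : ℕ)) := by
  have heval (c : Fin m → n × n) :
      eval (fun p => A p.1 p.2) (of fun r s : Fin m => (X ^ (r : ℕ)) (c s).1 (c s).2).det =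
        (of fun r s : Fin m => (A ^ (r : ℕ)) (c s).1 (c s).2).det := by
    rw [RingHom.map_det]
    congr 1
    ext r s
    exact congrFun₂ (map_eval_pow_of_eq_X hX A r) (c s).1 (c s).2
  rw [← linearIndependent_uncurry_iff, linearIndependent_iff_exists_det_ne_zero, zeroLocus_span]
  simp only [Set.mem_ofPred_eq, aeval_eq_eval, not_exists, not_and, not_not]
  constructor
  · intro h c hc
    rw [← heval]
    exact h _ ⟨c, hc, rfl⟩
  · rintro h _ ⟨c, hc, rfl⟩
    rw [heval]
    exact h c hc

theorem stmt_4_general (n k : ℕ)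
    (X : Matrix (Fin n) (Fin n) (MvPolynomial (Fin n × Fin n) ℂ))
    (hX : ∀ i j, X i j = MvPolynomial.X (i, j))
    (J : Ideal (MvPolynomial (Fin n × Fin n) ℂ))
    (hJ : J = Ideal.span { d | ∃ c : Fin (n - k + 1) → Fin n × Fin n, Function.Injective c ∧
      d = Matrix.det (Matrix.of fun r s : Fin (n - k + 1) => (X ^ (r : ℕ)) (c s).1 (c s).2) }) :
    ∀ f : MvPolynomial (Fin n × Fin n) ℂ, f ∈ J.radical ↔
      ∀ A : Matrix (Fin n) (Fin n) ℂ,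
        ¬ LinearIndependent ℂ (fun r : Fin (n - k + 1) => A ^ (r : ℕ)) →
        MvPolynomial.eval (fun p => A p.1 p.2) f = 0 := by
  intro f
  rw [hJ, ← vanishingIdeal_zeroLocus_eq_radical (K := ℂ), mem_vanishingIdeal_iff]
  simp only [aeval_eq_eval]
  constructor
  · intro hf A hA
    exact hf _ ((mem_zeroLocus_span_det_pow_iff hX _ A).2 hA)
  · intro hf x hx
    exact hf (of fun i j => x (i, j)) ((mem_zeroLocus_span_det_pow_iff hX _ _).1 hx)

/-- The radical of the ideal generated by the `(n-k+1) × (n-k+1)` minors of the matrix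
whose rows list the entries of the powers `X^0, …, X^{n-k}` of the generic matrix equals
the vanishing ideal of the set of `k`-degenerate matrices. -/
theorem stmt_4 (n k : ℕ) (hn : 2 ≤ n) (hk : k ≤ n - 1)
    (X : Matrix (Fin n) (Fin n) (MvPolynomial (Fin n × Fin n) ℂ))
    (hX : ∀ i j, X i j = MvPolynomial.X (i, j))
    (J : Ideal (MvPolynomial (Fin n × Fin n) ℂ))
    (hJ : J = Ideal.span { d | ∃ c : Fin (n - k + 1) → Fin n × Fin n, Function.Injective c ∧
      d = Matrix.det (Matrix.of fun r s : Fin (n - k + 1) => (X ^ (r : ℕ)) (c s).1 (c s).2) }) :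
    ∀ f : MvPolynomial (Fin n × Fin n) ℂ, f ∈ J.radical ↔
      ∀ A : Matrix (Fin n) (Fin n) ℂ,
        ¬ LinearIndependent ℂ (fun r : Fin (n - k + 1) => A ^ (r : ℕ)) →
        MvPolynomial.eval (fun p => A p.1 p.2) f = 0 :=
  stmt_4_general n k X hX J hJ
end

section
/- Let A ∈ Matrix (Fin 3) (Fin 3) ℂ be such that the family (I₃, A, A²) is linearly dependent over ℂ (equivalently, the minimal polynomial of A has degree at most 2), and set B = A − (trace(A)/3)·I₃. Then: (i) (trace(B²))³ = 54 · (det B)², and (ii) 9·(det B)·B = 3·trace(B²)·B² − (trace(B²))²·I₃ (an identity of 3×3 matrices). -/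
/-!
Since `1, A, A²` are dependent, `A² = p A + q` (a scalar `A` satisfies such a relation too),
and then the shift `B = A - t` satisfies a relation `B² = p' B + q'` of the same shape. As `tr B = 0`,
taking traces gives `tr B² = 3q'`. Comparing `B³ = B · B²` with Cayley–Hamilton
`2 B³ = tr(B²) B + 2 det B` and taking traces once more yields `det B = p'q'` and, unless
`B = 0`, `q' = 2p'²`; both identities are then polynomial identities in `p'`.
-/

open Matrix

section Algebra

variable {K R : Type*} [Field K] [Ring R] [Algebra K R]

theorem exists_sq_eq_of_not_linearIndependent {x : R}
    (h : ¬ LinearIndependent K (fun r : Fin 3 => x ^ (r : ℕ))) :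
    ∃ p q : K, x ^ 2 = p • x + q • 1 := by
  obtain ⟨g, hsum, i, hi⟩ := Fintype.not_linearIndependent_iff.mp h
  simp only [Fin.sum_univ_three, Fin.val_zero, Fin.val_one, Fin.val_two, pow_zero, pow_one]
    at hsum
  by_cases h2 : g 2 = 0
  · rw [h2, zero_smul, add_zero] at hsum
    by_cases h1 : g 1 = 0
    · -- `g 0 • 1 = 0` with `g 0 ≠ 0` forces `R` to be trivial
      have h0 : g 0 ≠ 0 := by fin_cases i <;> simp_all
      rw [h1, zero_smul, add_zero, smul_eq_zero] at hsum
      have : Subsingleton R := subsingleton_of_zero_eq_one (hsum.resolve_left h0).symm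
      exact ⟨0, 0, Subsingleton.elim _ _⟩
    · have hsum_mul : g 0 • x + g 1 • x ^ 2 = 0 := by
        simpa only [add_mul, smul_mul_assoc, one_mul, zero_mul, ← sq] using
          congrArg (· * x) hsum
      refine ⟨-(g 0 / g 1), 0, smul_right_injective R h1 ?_⟩
      simp only [smul_add, smul_smul, mul_neg, mul_div_cancel₀ _ h1]
      linear_combination (norm := module) hsum_mul
  · refine ⟨-(g 1 / g 2), -(g 0 / g 2), smul_right_injective R h2 ?_⟩
    simp only [smul_add, smul_smul, mul_neg, mul_div_cancel₀ _ h2]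
    linear_combination (norm := module) hsum

theorem sub_smul_one_sq_eq {x : R} {p q : K} (h : x ^ 2 = p • x + q • 1) (t : K) :
    (x - t • 1) ^ 2 = (p - 2 * t) • (x - t • 1) + (q + p * t - t ^ 2) • 1 := by
  rw [sq, sub_mul, mul_sub, mul_sub, ← sq, h]
  simp only [smul_mul_assoc, mul_smul_comm, one_mul, mul_one, smul_smul]
  module

end Algebra

-- Cayley–Hamilton for a traceless `3 × 3` matrix.
theorem two_smul_pow_three_of_trace_eq_zero {R : Type*} [CommRing R]
    {M : Matrix (Fin 3) (Fin 3) R} (hM : trace M = 0) :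
    (2 : R) • M ^ 3 = trace (M ^ 2) • M + (2 * M.det) • 1 := by
  have h22 : M 2 2 = -(M 0 0 + M 1 1) := by
    rw [trace_fin_three] at hM
    linear_combination hM
  ext i j
  fin_cases i <;> fin_cases j <;>
    simp [pow_succ, mul_apply, Fin.sum_univ_three, trace_fin_three, det_fin_three, one_apply,
      h22] <;> ring

theorem trace_sq_eq_of_sq_eq {R : Type*} [CommRing R] {M : Matrix (Fin 3) (Fin 3) R} {p q : R}
    (hM : trace M = 0) (h : M ^ 2 = p • M + q • 1) : trace (M ^ 2) = 3 * q := by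
  simp [h, hM, mul_comm]

section Field

variable {K : Type*} [Field K] [CharZero K]

theorem eq_zero_of_trace_eq_zero_of_smul_eq_smul_one {n : Type*} [Fintype n] [DecidableEq n]
    [Nonempty n] {M : Matrix n n K} (hM : trace M = 0) {a b : K} (h : a • M = b • 1) :
    b = 0 := by
  have := congrArg trace h
  rw [trace_smul, trace_smul, trace_one, hM, smul_zero, smul_eq_mul] at this
  exact (mul_eq_zero.mp this.symm).resolve_right (Nat.cast_ne_zero.mpr Fintype.card_ne_zero)

variable {M : Matrix (Fin 3) (Fin 3) K} {p q : K}

theorem sq_eq_two_mul_sq_and_det_eq_of_sq_eq (hM : trace M = 0) (hM0 : M ≠ 0)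
    (h : M ^ 2 = p • M + q • 1) : q = 2 * p ^ 2 ∧ M.det = p * q := by
  have hcube : M ^ 3 = (p ^ 2 + q) • M + (p * q) • 1 := by
    rw [pow_succ', h, mul_add, mul_smul_comm, mul_smul_comm, ← sq, h, mul_one]
    module
  have hkey : (2 * p ^ 2 - q) • M = (2 * (M.det - p * q)) • 1 := by
    have hCH := two_smul_pow_three_of_trace_eq_zero hM
    rw [hcube, trace_sq_eq_of_sq_eq hM h] at hCH
    linear_combination (norm := module) hCH
  have hdet : M.det = p * q := by
    have := eq_zero_of_trace_eq_zero_of_smul_eq_smul_one hM hkey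
    linear_combination this / 2
  rw [hdet, sub_self, mul_zero, zero_smul, smul_eq_zero] at hkey
  exact ⟨by linear_combination -hkey.resolve_right hM0, hdet⟩

theorem trace_sq_pow_three_and_det_smul_of_sq_eq (hM : trace M = 0)
    (h : M ^ 2 = p • M + q • 1) :
    trace (M ^ 2) ^ 3 = 54 * M.det ^ 2 ∧
      (9 * M.det) • M = (3 * trace (M ^ 2)) • M ^ 2 - trace (M ^ 2) ^ 2 • 1 := by
  rcases eq_or_ne M 0 with rfl | hM0
  · simp
  obtain ⟨hq, hdet⟩ := sq_eq_two_mul_sq_and_det_eq_of_sq_eq hM hM0 h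
  rw [trace_sq_eq_of_sq_eq hM h, hdet, h, hq]
  constructor
  · ring
  · module

end Field

/-- For a `3×3` complex matrix `A` with minimal polynomial of degree at most `2`
(i.e. `I₃, A, A²` linearly dependent) and `B = A - (tr A / 3) I₃`, we have
`(tr B²)³ = 54 (det B)²` and `9 (det B) B = 3 (tr B²) B² - (tr B²)² I₃`. -/
theorem stmt_6 (A : Matrix (Fin 3) (Fin 3) ℂ)
    (hA : ¬ LinearIndependent ℂ (fun r : Fin 3 => A ^ (r : ℕ)))
    (B : Matrix (Fin 3) (Fin 3) ℂ)
    (hB : B = A - (Matrix.trace A / 3) • (1 : Matrix (Fin 3) (Fin 3) ℂ)) :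
    (Matrix.trace (B ^ 2)) ^ 3 = 54 * B.det ^ 2 ∧
    (9 * B.det) • B =
      (3 * Matrix.trace (B ^ 2)) • B ^ 2
        - (Matrix.trace (B ^ 2)) ^ 2 • (1 : Matrix (Fin 3) (Fin 3) ℂ) := by
  subst hB
  obtain ⟨p, q, h⟩ := exists_sq_eq_of_not_linearIndependent hA
  refine trace_sq_pow_three_and_det_smul_of_sq_eq ?_ (sub_smul_one_sq_eq h _)
  simp [trace_sub, trace_smul]
end

section
/- Let φ : MvPolynomial (Fin 4) ℂ → MvPolynomial (Fin 2) ℂ be the ℂ-algebra homomorphism determined by x₁ ↦ z², x₂ ↦ z³, x₃ ↦ D, x₄ ↦ z·D, where z and D denote the two variables of MvPolynomial (Fin 2) ℂ and x₁, x₂, x₃, x₄ the four variables of MvPolynomial (Fin 4) ℂ. Then the kernel of φ is generated as an ideal by the four polynomials x₁³ − x₂², x₁·x₄ − x₂·x₃, x₄² − x₁·x₃², x₂·x₄ − x₁²·x₃. -/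
/-!
Modulo the four relations every polynomial reduces to the shape
`f(x₁, x₃) + x₂ g(x₁, x₃) + x₄ h(x₃)`: multiplying such an expression by any variable and
rewriting with the relations gives this shape again. Under `φ` the three summands become
`f(z², D)`, `z³ g(z², D)` and `z D h(D)`. The first is even in `z` and the other two are odd, so
`z ↦ -z` separates them; after dividing the odd part by `z`, setting `z = 0` isolates `D h(D)`.
Finally `f ↦ f(z², D)` is injective, because following it by `D ↦ D²` gives `expand 2`. Hence a
normal form in the kernel is zero.
-/

open MvPolynomial

namespace DegenerateTraceZero

variable (R : Type*) [CommRing R]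

noncomputable abbrev param : MvPolynomial (Fin 4) R →ₐ[R] MvPolynomial (Fin 2) R :=
  aeval ![X 0 ^ 2, X 0 ^ 3, X 1, X 0 * X 1]

noncomputable def relations : Ideal (MvPolynomial (Fin 4) R) :=
  Ideal.span {X 0 ^ 3 - X 1 ^ 2, X 0 * X 3 - X 1 * X 2, X 3 ^ 2 - X 0 * X 2 ^ 2,
    X 1 * X 3 - X 0 ^ 2 * X 2}

variable {R}

theorem relations_le_ker_param : relations R ≤ RingHom.ker (param R) := by
  rw [relations, Ideal.span_le]
  rintro _ (rfl | rfl | rfl | rfl) <;> simp [Matrix.cons_val_one] <;> ring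

theorem combination_mem_relations (c₁ c₂ c₃ c₄ : MvPolynomial (Fin 4) R) :
    c₁ * (X 0 ^ 3 - X 1 ^ 2) + c₂ * (X 0 * X 3 - X 1 * X 2) + c₃ * (X 3 ^ 2 - X 0 * X 2 ^ 2)
      + c₄ * (X 1 * X 3 - X 0 ^ 2 * X 2) ∈ relations R := by
  refine add_mem (add_mem (add_mem ?_ ?_) ?_) ?_ <;>
    exact Ideal.mul_mem_left _ _ (Ideal.subset_span (by simp))

noncomputable def normalForm (q₀ q₁ : MvPolynomial (Fin 2) R) (q₂ : Polynomial R) :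
    MvPolynomial (Fin 4) R :=
  rename ![0, 2] q₀ + X 1 * rename ![0, 2] q₁ + X 3 * Polynomial.aeval (X 2) q₂

theorem exists_eq_aeval_X_one_add_X_zero_mul (q : MvPolynomial (Fin 2) R) :
    ∃ (r : Polynomial R) (s : MvPolynomial (Fin 2) R), q = Polynomial.aeval (X 1) r + X 0 * s := by
  induction q using MvPolynomial.induction_on with
  | C a => exact ⟨Polynomial.C a, 0, by simp⟩
  | add p q hp hq =>
    obtain ⟨r, s, rfl⟩ := hp
    obtain ⟨r', s', rfl⟩ := hq
    exact ⟨r + r', s + s', by simp only [map_add]; ring⟩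
  | mul_X p i hp =>
    obtain ⟨r, s, rfl⟩ := hp
    fin_cases i
    · exact ⟨0, Polynomial.aeval (X 1) r + X 0 * s, by simp [mul_comm]⟩
    · exact ⟨r * Polynomial.X, s * X 1, by simp; ring⟩

theorem exists_normalForm_mul_X (q₀ q₁ : MvPolynomial (Fin 2) R) (q₂ : Polynomial R) (i : Fin 4) :
    ∃ q₀' q₁' q₂', normalForm q₀ q₁ q₂ * X i - normalForm q₀' q₁' q₂' ∈ relations R := by
  fin_cases i
  · refine ⟨q₀ * X 0, q₁ * X 0 + X 1 * Polynomial.aeval (X 1) q₂, 0, ?_⟩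
    convert combination_mem_relations 0 (Polynomial.aeval (X 2) q₂) 0 0 using 1
    simp [normalForm]
    ring
  · refine ⟨X 0 ^ 3 * q₁ + X 0 ^ 2 * X 1 * Polynomial.aeval (X 1) q₂, q₀, 0, ?_⟩
    convert combination_mem_relations (-rename ![0, 2] q₁) 0 0 (Polynomial.aeval (X 2) q₂) using 1
    simp [normalForm]
    ring
  · refine ⟨q₀ * X 1, q₁ * X 1, q₂ * Polynomial.X, ?_⟩
    convert (relations R).zero_mem using 1
    simp [normalForm]
    ring
  · obtain ⟨r, s, rfl⟩ := exists_eq_aeval_X_one_add_X_zero_mul q₀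
    refine ⟨X 0 ^ 2 * X 1 * q₁ + X 0 * X 1 ^ 2 * Polynomial.aeval (X 1) q₂, X 1 * s, r, ?_⟩
    convert combination_mem_relations 0 (rename ![0, 2] s) (Polynomial.aeval (X 2) q₂)
      (rename ![0, 2] q₁) using 1
    simp [normalForm]
    ring

theorem exists_sub_normalForm_mem (p : MvPolynomial (Fin 4) R) :
    ∃ q₀ q₁ q₂, p - normalForm q₀ q₁ q₂ ∈ relations R := by
  induction p using MvPolynomial.induction_on with
  | C a => exact ⟨C a, 0, 0, by simp [normalForm]⟩
  | add p q hp hq =>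
    obtain ⟨a₀, a₁, a₂, hp⟩ := hp
    obtain ⟨b₀, b₁, b₂, hq⟩ := hq
    refine ⟨a₀ + b₀, a₁ + b₁, a₂ + b₂, ?_⟩
    convert add_mem hp hq using 1
    simp only [normalForm, map_add]
    ring
  | mul_X p i hp =>
    obtain ⟨q₀, q₁, q₂, hp⟩ := hp
    obtain ⟨q₀', q₁', q₂', h⟩ := exists_normalForm_mul_X q₀ q₁ q₂ i
    refine ⟨q₀', q₁', q₂', ?_⟩
    convert add_mem (Ideal.mul_mem_right (X i) _ hp) h using 1
    ring

noncomputable abbrev expandFirst : MvPolynomial (Fin 2) R →ₐ[R] MvPolynomial (Fin 2) R :=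
  aeval ![X 0 ^ 2, X 1]

theorem param_normalForm (q₀ q₁ : MvPolynomial (Fin 2) R) (q₂ : Polynomial R) :
    param R (normalForm q₀ q₁ q₂) =
      expandFirst q₀ + X 0 ^ 3 * expandFirst q₁ + X 0 * X 1 * Polynomial.aeval (X 1) q₂ := by
  have hrename (q : MvPolynomial (Fin 2) R) : param R (rename ![0, 2] q) = expandFirst q := by
    rw [aeval_rename]
    congr 2
    ext i
    fin_cases i <;> rfl
  simp only [normalForm, map_add, map_mul, hrename, ← Polynomial.aeval_algHom_apply, aeval_X]
  rfl

theorem expandFirst_injective : Function.Injective (expandFirst (R := R)) := by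
  let squareSecond : MvPolynomial (Fin 2) R →ₐ[R] MvPolynomial (Fin 2) R := aeval ![X 0, X 1 ^ 2]
  have h : squareSecond.comp expandFirst = expand 2 := by
    ext i : 1
    fin_cases i <;> simp [squareSecond]
  refine Function.Injective.of_comp (f := squareSecond) ?_
  rw [← AlgHom.coe_comp, h]
  exact expand_injective two_pos

theorem aeval_X_one_injective :
    Function.Injective (Polynomial.aeval (R := R) (X 1 : MvPolynomial (Fin 2) R)) := by
  refine Function.LeftInverse.injective
    (g := aeval ![(0 : Polynomial R), Polynomial.X]) fun q => ?_
  rw [← Polynomial.aeval_algHom_apply]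
  simp

theorem aeval_neg_X_zero_expandFirst (q : MvPolynomial (Fin 2) R) :
    aeval ![-X 0, X 1] (expandFirst q) = expandFirst (R := R) q := by
  rw [← AlgHom.comp_apply]
  congr 1
  ext i : 1
  fin_cases i <;> simp

theorem aeval_aeval_X_one (a : MvPolynomial (Fin 2) R) (q : Polynomial R) :
    aeval (R := R) ![a, X 1] (Polynomial.aeval (X 1) q) = Polynomial.aeval (X 1) q := by
  rw [← Polynomial.aeval_algHom_apply, aeval_X]
  rfl

variable [IsDomain R] [NeZero (2 : R)]

theorem eq_zero_of_expandFirst_add_eq_zero {q₀ q₁ : MvPolynomial (Fin 2) R} {q₂ : Polynomial R}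
    (h : expandFirst q₀ + X 0 ^ 3 * expandFirst q₁ + X 0 * X 1 * Polynomial.aeval (X 1) q₂ = 0) :
    q₀ = 0 ∧ q₁ = 0 ∧ q₂ = 0 := by
  have hneg :
      expandFirst q₀ - X 0 ^ 3 * expandFirst q₁ - X 0 * X 1 * Polynomial.aeval (X 1) q₂ = 0 := by
    have := congrArg (aeval ![-X 0, (X 1 : MvPolynomial (Fin 2) R)]) h
    simp only [map_add, map_mul, map_pow, aeval_neg_X_zero_expandFirst, aeval_X, map_zero,
      aeval_aeval_X_one, Matrix.cons_val_zero, Matrix.cons_val_one] at this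
    linear_combination this
  have h₀ : expandFirst q₀ = 0 := by
    have two_mul : (2 : MvPolynomial (Fin 2) R) * expandFirst q₀ = 0 := by
      linear_combination h + hneg
    refine (mul_eq_zero.mp two_mul).resolve_left ?_
    rw [← map_ofNat C 2]
    exact C_ne_zero.mpr two_ne_zero
  have hodd : X 0 ^ 2 * expandFirst q₁ + X 1 * Polynomial.aeval (X 1) q₂ = 0 := by
    have : X 0 * (X 0 ^ 2 * expandFirst q₁ + X 1 * Polynomial.aeval (X 1) q₂) = 0 := by
      linear_combination h - h₀
    simpa [X_ne_zero] using this
  have h₂ : Polynomial.aeval (X 1 : MvPolynomial (Fin 2) R) q₂ = 0 := by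
    have := congrArg (aeval ![0, (X 1 : MvPolynomial (Fin 2) R)]) hodd
    simp only [map_add, map_mul, map_pow, aeval_X, map_zero,
      aeval_aeval_X_one, Matrix.cons_val_zero, Matrix.cons_val_one] at this
    simpa [X_ne_zero] using this
  rw [h₂, mul_zero, add_zero] at hodd
  refine ⟨expandFirst_injective (by simpa using h₀), expandFirst_injective ?_,
    aeval_X_one_injective (by simpa using h₂)⟩
  simpa [X_ne_zero] using hodd

variable (R) in
theorem ker_param : RingHom.ker (param R) = relations R := by
  refine le_antisymm (fun p hp => ?_) relations_le_ker_param
  obtain ⟨q₀, q₁, q₂, hmem⟩ := exists_sub_normalForm_mem p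
  have hnf : param R (normalForm q₀ q₁ q₂) = 0 := by
    have h := relations_le_ker_param hmem
    rwa [RingHom.mem_ker, map_sub, RingHom.mem_ker.mp hp, zero_sub, neg_eq_zero] at h
  rw [param_normalForm] at hnf
  obtain ⟨rfl, rfl, rfl⟩ := eq_zero_of_expandFirst_add_eq_zero hnf
  simpa [normalForm] using hmem

end DegenerateTraceZero

/-- The kernel of the ℂ-algebra map `ℂ[x₁,x₂,x₃,x₄] → ℂ[z,D]`,
`x₁ ↦ z², x₂ ↦ z³, x₃ ↦ D, x₄ ↦ zD`, is generated by
`x₁³ - x₂²`, `x₁x₄ - x₂x₃`, `x₄² - x₁x₃²`, `x₂x₄ - x₁²x₃`. -/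
theorem stmt_7 :
    RingHom.ker (MvPolynomial.aeval (R := ℂ)
      ![(MvPolynomial.X 0 : MvPolynomial (Fin 2) ℂ) ^ 2,
        (MvPolynomial.X 0 : MvPolynomial (Fin 2) ℂ) ^ 3,
        (MvPolynomial.X 1 : MvPolynomial (Fin 2) ℂ),
        (MvPolynomial.X 0 : MvPolynomial (Fin 2) ℂ) * MvPolynomial.X 1] :
      MvPolynomial (Fin 4) ℂ →ₐ[ℂ] MvPolynomial (Fin 2) ℂ) =
    Ideal.span
      { (MvPolynomial.X 0 : MvPolynomial (Fin 4) ℂ) ^ 3 - MvPolynomial.X 1 ^ 2,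
        MvPolynomial.X 0 * MvPolynomial.X 3 - MvPolynomial.X 1 * MvPolynomial.X 2,
        MvPolynomial.X 3 ^ 2 - MvPolynomial.X 0 * MvPolynomial.X 2 ^ 2,
        MvPolynomial.X 1 * MvPolynomial.X 3 - MvPolynomial.X 0 ^ 2 * MvPolynomial.X 2 } :=
  DegenerateTraceZero.ker_param ℂ
end

section
/- For every symmetric matrix A ∈ Matrix (Fin 3) (Fin 3) ℂ (i.e. Aᵀ = A), let p_A ∈ MvPolynomial (Fin 3) ℂ be the homogeneous cubic polynomial in the variables x₁, x₂, x₃ given by the determinant of the 3×3 matrix with columns x, A·x, A²·x (where x is the column vector of variables). Then p_A is harmonic: (∂²/∂x₁² + ∂²/∂x₂² + ∂²/∂x₃²) p_A = 0. Moreover, there exists a symmetric A with p_A ≠ 0 (e.g. A = diag(0,1,2) gives p_A = 2·x₁x₂x₃). -/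
/-!
Write `p_A = u ⬝ᵥ v ⨯₃ w` with `u = x`, `v = Ax`, `w = A²x`. Since the entries of `u, v, w` are
linear forms, the Laplacian of the triple product reduces, by the Leibniz rule, to
`2 (u ⬝ᵥ Σᵢ ∂ᵢv ⨯₃ ∂ᵢw + v ⬝ᵥ Σᵢ ∂ᵢw ⨯₃ ∂ᵢu + w ⬝ᵥ Σᵢ ∂ᵢu ⨯₃ ∂ᵢv)`. For `v = Bx`, `w = Dx` the vector
`Σᵢ ∂ᵢv ⨯₃ ∂ᵢw = Σᵢ Bᵀ i ⨯₃ Dᵀ i` is the axial vector of the skew part of `B Dᵀ`, and for powers of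
a symmetric `A` the product `Aʲ (Aᵏ)ᵀ = Aʲ⁺ᵏ` is symmetric.

For a diagonal `A = diag(d)`, evaluating `p_A` at `(1, 1, 1)` gives the Vandermonde determinant of
`d`, which is nonzero when the entries of `d` are distinct.
-/

open Matrix MvPolynomial

section Derivation

variable {R A : Type*} [CommSemiring R] [CommRing A] [Algebra R A] (D : Derivation R A A)

theorem Derivation.map_dotProduct {n : Type*} [Fintype n] (u v : n → A) :
    D (u ⬝ᵥ v) = (D ∘ u) ⬝ᵥ v + u ⬝ᵥ (D ∘ v) := by
  simp only [dotProduct, map_sum, Derivation.leibniz, smul_eq_mul, Function.comp_apply,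
    ← Finset.sum_add_distrib]
  exact Finset.sum_congr rfl fun _ _ => by ring

theorem Derivation.comp_cross (u v : Fin 3 → A) :
    D ∘ (u ⨯₃ v) = (D ∘ u) ⨯₃ v + u ⨯₃ (D ∘ v) := by
  ext i
  fin_cases i <;>
    simp only [cross_apply, Function.comp_apply, Pi.add_apply, map_sub, leibniz, smul_eq_mul,
      Fin.zero_eta, Fin.mk_one, Fin.reduceFinMk, cons_val_zero, cons_val_one, cons_val] <;> ring

theorem Derivation.map_map_tripleProduct (u v w : Fin 3 → A) :
    D (D (u ⬝ᵥ v ⨯₃ w)) =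
      (D ∘ D ∘ u) ⬝ᵥ v ⨯₃ w + u ⬝ᵥ (D ∘ D ∘ v) ⨯₃ w + u ⬝ᵥ v ⨯₃ (D ∘ D ∘ w) +
        2 * (u ⬝ᵥ (D ∘ v) ⨯₃ (D ∘ w) + (D ∘ u) ⬝ᵥ v ⨯₃ (D ∘ w) + (D ∘ u) ⬝ᵥ (D ∘ v) ⨯₃ w) := by
  simp only [D.map_dotProduct, D.comp_cross, map_add, dotProduct_add]
  ring

end Derivation

namespace Matrix

variable {R : Type*} [CommRing R]

theorem det_of_columns_eq_tripleProduct (f : Fin 3 → Fin 3 → R) :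
    det (of fun r c => f c r) = f 0 ⬝ᵥ f 1 ⨯₃ f 2 := by
  rw [triple_product_eq_det, ← det_transpose]
  congr 1
  ext r c
  fin_cases r <;> rfl

theorem sum_transpose_cross_transpose_eq_zero {n : Type*} [Fintype n]
    (B D : Matrix (Fin 3) n R) (h : (B * Dᵀ).IsSymm) : ∑ i, Bᵀ i ⨯₃ Dᵀ i = 0 := by
  have hBD : ∀ a b, ∑ i, B a i * D b i = ∑ i, B b i * D a i := fun a b => by
    simpa [mul_apply] using congrFun (congrFun h b) a
  ext a
  fin_cases a <;> simp [Finset.sum_apply, cross_apply, Finset.sum_sub_distrib, hBD]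

end Matrix

namespace MvPolynomial

variable {σ R : Type*} [CommRing R] [Fintype σ]

noncomputable def laplacian (p : MvPolynomial σ R) : MvPolynomial σ R :=
  ∑ i, pderiv i (pderiv i p)

noncomputable def gradCross (u v : Fin 3 → MvPolynomial σ R) : Fin 3 → MvPolynomial σ R :=
  ∑ i, (pderiv i ∘ u) ⨯₃ (pderiv i ∘ v)

theorem laplacian_comp {m : Type*} (u : m → MvPolynomial σ R) :
    laplacian ∘ u = ∑ i, pderiv i ∘ pderiv i ∘ u := by
  ext r
  simp [laplacian, Finset.sum_apply]

theorem laplacian_tripleProduct (u v w : Fin 3 → MvPolynomial σ R) :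
    laplacian (u ⬝ᵥ v ⨯₃ w) =
      (laplacian ∘ u) ⬝ᵥ v ⨯₃ w + u ⬝ᵥ (laplacian ∘ v) ⨯₃ w + u ⬝ᵥ v ⨯₃ (laplacian ∘ w) +
        2 * (u ⬝ᵥ gradCross v w + v ⬝ᵥ gradCross w u + w ⬝ᵥ gradCross u v) := by
  rw [laplacian_comp, laplacian_comp, laplacian_comp, laplacian]
  simp only [gradCross, map_sum, LinearMap.sum_apply, sum_dotProduct,
    dotProduct_sum, Finset.mul_sum, ← Finset.sum_add_distrib]
  refine Finset.sum_congr rfl fun i _ => ?_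
  rw [Derivation.map_map_tripleProduct, triple_product_permutation (pderiv i ∘ u) v,
    triple_product_permutation w]

variable [DecidableEq σ]

theorem pderiv_comp_map_C_mulVec_X {m : Type*} (N : Matrix m σ R) (i : σ) :
    pderiv i ∘ (N.map C *ᵥ X) = (N.map C)ᵀ i := by
  ext r
  simp [mulVec, dotProduct, pderiv_X, Pi.single_apply]

theorem laplacian_comp_map_C_mulVec_X {m : Type*} (N : Matrix m σ R) :
    laplacian ∘ (N.map C *ᵥ X) = 0 := by
  simp only [laplacian_comp, pderiv_comp_map_C_mulVec_X]
  ext r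
  simp

theorem gradCross_map_C_mulVec_X (B D : Matrix (Fin 3) σ R) (h : (B * Dᵀ).IsSymm) :
    gradCross (B.map C *ᵥ X) (D.map C *ᵥ X) = 0 := by
  simp only [gradCross, pderiv_comp_map_C_mulVec_X]
  refine sum_transpose_cross_transpose_eq_zero _ _ ?_
  rw [← transpose_map, ← Matrix.map_mul]
  exact h.map _

end MvPolynomial

section Krylov

variable {R : Type*} [CommRing R] {n : ℕ}

noncomputable def krylovDet (A : Matrix (Fin n) (Fin n) R) : MvPolynomial (Fin n) R :=
  det (of fun r c : Fin n => ((A.map C) ^ (c : ℕ) *ᵥ X) r)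

theorem laplacian_krylovDet_eq_zero {A : Matrix (Fin 3) (Fin 3) R} (hA : A.IsSymm) :
    laplacian (krylovDet A) = 0 := by
  have hpow : ∀ k : ℕ, (A.map C) ^ k = (A ^ k).map (C : R →+* MvPolynomial (Fin 3) R) :=
    fun k => (map_pow (C.mapMatrix) A k).symm
  have hsymm : ∀ j k : ℕ, (A ^ j * (A ^ k)ᵀ).IsSymm := fun j k => by
    rw [(hA.pow k).eq, ← pow_add]
    exact hA.pow _
  rw [krylovDet, det_of_columns_eq_tripleProduct, laplacian_tripleProduct]
  simp only [Fin.val_zero, Fin.val_one, Fin.val_two, hpow, laplacian_comp_map_C_mulVec_X,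
    gradCross_map_C_mulVec_X _ _ (hsymm _ _)]
  simp

theorem eval_krylovDet (A : Matrix (Fin n) (Fin n) R) (x : Fin n → R) :
    eval x (krylovDet A) = det (of fun r c : Fin n => (A ^ (c : ℕ) *ᵥ x) r) := by
  rw [krylovDet, RingHom.map_det]
  congr 1
  ext r c
  rw [RingHom.mapMatrix_apply, map_apply, of_apply, of_apply, RingHom.map_mulVec]
  congr
  · rw [← RingHom.mapMatrix_apply, map_pow, RingHom.mapMatrix_apply, map_map]
    congr 1
    ext
    simp
  · ext
    simp

theorem eval_one_krylovDet_diagonal (d : Fin n → R) :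
    eval 1 (krylovDet (diagonal d)) = det (vandermonde d) := by
  rw [eval_krylovDet]
  congr 1
  ext r c
  simp [diagonal_pow, mulVec_diagonal, vandermonde]

theorem krylovDet_diagonal_ne_zero [IsDomain R] {d : Fin n → R} (hd : Function.Injective d) :
    krylovDet (diagonal d) ≠ 0 := fun h => by
  have hvdm := eval_one_krylovDet_diagonal d
  rw [h, map_zero, eq_comm] at hvdm
  exact det_vandermonde_ne_zero_iff.mpr hd hvdm

end Krylov

/-- For every complex symmetric `3×3` matrix `A`, the cubic form
`p_A(x) = det(x | Ax | A²x)` is harmonic, and `p_A ≠ 0` for some symmetric `A`. -/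
theorem stmt_10 :
    (∀ A : Matrix (Fin 3) (Fin 3) ℂ, Aᵀ = A →
      ∑ i : Fin 3, MvPolynomial.pderiv i (MvPolynomial.pderiv i
        (Matrix.det (Matrix.of fun r c : Fin 3 =>
          Matrix.mulVec ((A.map MvPolynomial.C) ^ (c : ℕ))
            (fun l => MvPolynomial.X l) r))) = 0) ∧
    (∃ A : Matrix (Fin 3) (Fin 3) ℂ, Aᵀ = A ∧
      Matrix.det (Matrix.of fun r c : Fin 3 =>
        Matrix.mulVec ((A.map MvPolynomial.C) ^ (c : ℕ))
          (fun l => MvPolynomial.X l) r) ≠ 0) := by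
  refine ⟨fun A hA => laplacian_krylovDet_eq_zero hA,
    diagonal ![0, 1, 2], diagonal_transpose _, krylovDet_diagonal_ne_zero ?_⟩
  intro i j hij
  fin_cases i <;> fin_cases j <;> simp_all
end

section
/- Let n ≥ 2 and set N = binom(2n−1, n−1). There exist polynomials q₁, …, q_N ∈ MvPolynomial (Fin n × Fin n) ℂ such that for every Hermitian matrix A ∈ Matrix (Fin n) (Fin n) ℂ with eigenvalues λ₁(A), …, λ_n(A) (listed with multiplicity): ∏_{1≤i<j≤n} (λ_i(A) − λ_j(A))² = Σ_{m=1}^{N} ‖q_m(A)‖², where ‖·‖² denotes the squared complex absolute value. Equivalently, the discriminant of Hermitian n×n matrices is a sum of 2·binom(2n−1, n−1) squares of real polynomial functions (the real and imaginary parts of the q_m). -/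
/-!
Diagonalize `A = U * diagonal λ * Uᴴ`. The matrix with columns `A ^ l e_{j (π l)}` is `U` times the
Hadamard product of the Vandermonde matrix of `λ` with columns of `Uᴴ`, and summing its
determinant over `π` gives `det U * det (vandermonde λ) * permanent (Uᴴ restricted to columns j)`.
As `‖det U‖ = 1` and `‖det (vandermonde λ)‖ ^ 2` is the discriminant, it remains to see that the
squared permanents of the column selections of a unitary matrix sum to `k!`: this is the
Cauchy–Binet formula for permanents applied to `Uᴴ * U = 1`. The coefficient only depends on the
multiset of `j`, so the `k ^ k` squares collapse to one square per element of `Sym (Fin k) k`.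
-/

open Equiv Finset

def Sym.ofFn {α : Type*} {k : ℕ} (f : Fin k → α) : Sym α k := ⟨List.ofFn f, by simp⟩

theorem Sym.ofFn_surjective {α : Type*} {k : ℕ} :
    Function.Surjective (Sym.ofFn : (Fin k → α) → Sym α k) := by
  rintro ⟨m, rfl⟩
  obtain ⟨l, rfl⟩ := Quot.exists_rep m
  exact ⟨l.get, Subtype.ext (congrArg ((↑) : List α → Multiset α) (List.ofFn_get l))⟩

theorem Sym.ofFn_eq_ofFn_iff {α : Type*} {k : ℕ} {f g : Fin k → α} :
    Sym.ofFn f = Sym.ofFn g ↔ (List.ofFn f).Perm (List.ofFn g) :=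
  Subtype.ext_iff.trans Multiset.coe_eq_coe

theorem Tuple.exists_perm_comp_eq_of_perm {α : Type*} [LinearOrder α] {k : ℕ} {f g : Fin k → α}
    (h : (List.ofFn f).Perm (List.ofFn g)) : ∃ σ : Perm (Fin k), g ∘ σ = f := by
  have hsort : f ∘ sort f = g ∘ sort g :=
    List.ofFn_injective <| List.Perm.eq_of_sortedLE (monotone_sort f).sortedLE_ofFn
      (monotone_sort g).sortedLE_ofFn
      (((sort f).ofFn_comp_perm f).trans (h.trans ((sort g).ofFn_comp_perm g).symm))
  refine ⟨sort g * (sort f)⁻¹, funext fun i => ?_⟩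
  simpa using (congrFun hsort ((sort f)⁻¹ i)).symm

theorem Nat.choose_add_self_sub_one (k : ℕ) :
    (k + k - 1).choose k = (2 * k - 1).choose (k - 1) := by
  cases k with
  | zero => rfl
  | succ k =>
    rw [show k + 1 + (k + 1) - 1 = 2 * k + 1 by omega, show 2 * (k + 1) - 1 = 2 * k + 1 by omega]
    exact Nat.choose_symm_half k

namespace Matrix

section Permanent

variable {n R : Type*} [Fintype n] [DecidableEq n] [CommSemiring R]

theorem _root_.RingHom.map_permanent {S : Type*} [CommSemiring S] (f : R →+* S)
    (M : Matrix n n R) : f M.permanent = (M.map f).permanent := by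
  simp [permanent, map_sum, map_prod]

theorem sum_permanent_submatrix_mul_permanent_submatrix {m : Type*} [Fintype m]
    (V W : Matrix n m R) :
    ∑ j : n → m, permanent (V.submatrix id j) * permanent (W.submatrix id j)
      = (Fintype.card n).factorial * permanent (V * Wᵀ) := by
  have hrows (τ : Perm n) : ∑ σ : Perm n, ∏ i, (V * Wᵀ) (σ i) (τ i) = permanent (V * Wᵀ) :=
    permanent_permute_rows τ (V * Wᵀ)
  calc ∑ j : n → m, permanent (V.submatrix id j) * permanent (W.submatrix id j)
      = ∑ σ : Perm n, ∑ τ : Perm n, ∑ j : n → m, ∏ i, V (σ i) (j i) * W (τ i) (j i) := by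
        simp only [permanent, submatrix_apply, id, sum_mul_sum, ← prod_mul_distrib]
        rw [Finset.sum_comm]
        exact Finset.sum_congr rfl fun _ _ => Finset.sum_comm
    _ = ∑ σ : Perm n, ∑ τ : Perm n, ∏ i, (V * Wᵀ) (σ i) (τ i) := by
        simp only [mul_apply, transpose_apply, Fintype.prod_sum]
    _ = _ := by
        rw [Finset.sum_comm]
        simp [hrows, Fintype.card_perm]

theorem sum_norm_permanent_submatrix_sq {𝕜 : Type*} [RCLike 𝕜] {V : Matrix n n 𝕜}
    (hV : V ∈ unitaryGroup n 𝕜) :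
    ∑ j : n → n, ‖permanent (V.submatrix id j)‖ ^ 2 = (Fintype.card n).factorial := by
  have hVV : V * (V.map (starRingEnd 𝕜))ᵀ = 1 := mem_unitaryGroup_iff.mp hV
  have key := sum_permanent_submatrix_mul_permanent_submatrix V (V.map (starRingEnd 𝕜))
  rw [hVV, permanent_one, mul_one] at key
  have hnorm (M : Matrix n n 𝕜) :
      ((‖M.permanent‖ ^ 2 : ℝ) : 𝕜) = M.permanent * (M.map (starRingEnd 𝕜)).permanent := by
    rw [← RingHom.map_permanent, RCLike.mul_conj]
    push_cast
    rfl
  apply RCLike.ofReal_injective (K := 𝕜)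
  push_cast [hnorm, submatrix_map]
  exact key

end Permanent

variable {R : Type*} [CommRing R]

theorem sum_det_hadamard_submatrix_perm {n : Type*} [Fintype n] [DecidableEq n]
    (D W : Matrix n n R) :
    ∑ π : Perm n, det (D ⊙ W.submatrix id π) = det D * permanent W := by
  simp only [det_apply', hadamard_apply, submatrix_apply, id, prod_mul_distrib]
  rw [Finset.sum_comm, Finset.sum_mul]
  refine Finset.sum_congr rfl fun σ _ => ?_
  rw [← Finset.mul_sum, mul_assoc, ← Finset.mul_sum]
  congr 2
  rw [← permanent_permute_cols σ W, ← permanent_transpose]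
  rfl

/-- `x ↦ det (x | A x | ⋯ | A ^ (k - 1) x)` is a form of degree `k` in `x`; `covariantCoeff A j` is
its full polarization evaluated at the basis vectors `e (j 0), …, e (j (k - 1))`. -/
def covariantCoeff {k : ℕ} (A : Matrix (Fin k) (Fin k) R) (j : Fin k → Fin k) : R :=
  ∑ π : Perm (Fin k), det (of fun i l : Fin k => (A ^ (l : ℕ)) i (j (π l)))

variable {k : ℕ}

theorem covariantCoeff_comp_perm (A : Matrix (Fin k) (Fin k) R) (j : Fin k → Fin k)
    (τ : Perm (Fin k)) : covariantCoeff A (j ∘ τ) = covariantCoeff A j :=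
  Fintype.sum_equiv (Equiv.mulLeft τ) _ _ fun _ => rfl

theorem covariantCoeff_eq_of_sym_ofFn_eq (A : Matrix (Fin k) (Fin k) R) {j j' : Fin k → Fin k}
    (h : Sym.ofFn j = Sym.ofFn j') : covariantCoeff A j = covariantCoeff A j' := by
  obtain ⟨σ, rfl⟩ := Tuple.exists_perm_comp_eq_of_perm (Sym.ofFn_eq_ofFn_iff.mp h.symm)
  exact (covariantCoeff_comp_perm A j σ).symm

theorem _root_.RingHom.map_covariantCoeff {S : Type*} [CommRing S] (f : R →+* S)
    (A : Matrix (Fin k) (Fin k) R) (j : Fin k → Fin k) :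
    f (covariantCoeff A j) = covariantCoeff (f.mapMatrix A) j := by
  simp only [covariantCoeff, map_sum, RingHom.map_det, ← map_pow]
  rfl

theorem eval_covariantCoeff_mvPolynomialX (A : Matrix (Fin k) (Fin k) R) (j : Fin k → Fin k) :
    MvPolynomial.eval (fun p => A p.1 p.2) (covariantCoeff (mvPolynomialX (Fin k) (Fin k) R) j)
      = covariantCoeff A j := by
  rw [RingHom.map_covariantCoeff, mvPolynomialX_mapMatrix_eval]

theorem covariantCoeff_conj_diagonal {U V : Matrix (Fin k) (Fin k) R} (hVU : V * U = 1)
    (d : Fin k → R) (j : Fin k → Fin k) :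
    covariantCoeff (U * diagonal d * V) j
      = det U * det (vandermonde d) * permanent (V.submatrix id j) := by
  have hpow (l : ℕ) : (U * diagonal d * V) ^ l = U * diagonal (d ^ l) * V := by
    rw [← diagonal_pow]
    exact Units.conj_pow ⟨U, V, mul_eq_one_comm.mp hVU, hVU⟩ _ l
  have hcols (π : Perm (Fin k)) :
      of (fun i l : Fin k => ((U * diagonal d * V) ^ (l : ℕ)) i (j (π l)))
        = U * (vandermonde d ⊙ (V.submatrix id j).submatrix id π) := by
    ext i l
    simp only [of_apply, hpow]
    simp [mul_apply, diagonal_apply, mul_assoc]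
  simp only [covariantCoeff, hcols, det_mul, ← mul_sum]
  rw [sum_det_hadamard_submatrix_perm, mul_assoc]

theorem IsHermitian.sum_norm_covariantCoeff_sq {𝕜 : Type*} [RCLike 𝕜]
    {A : Matrix (Fin k) (Fin k) 𝕜} (hA : A.IsHermitian) :
    ∑ j : Fin k → Fin k, ‖covariantCoeff A j‖ ^ 2
      = k.factorial * ∏ i, ∏ l ∈ Ioi i, (hA.eigenvalues i - hA.eigenvalues l) ^ 2 := by
  set U : Matrix (Fin k) (Fin k) 𝕜 := (hA.eigenvectorUnitary : Matrix (Fin k) (Fin k) 𝕜)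
  have hspec : A = U * diagonal (RCLike.ofReal ∘ hA.eigenvalues) * star U := hA.spectral_theorem
  have hU : U ∈ unitaryGroup (Fin k) 𝕜 := hA.eigenvectorUnitary.2
  have hdetU : ‖det U‖ = 1 := CStarRing.norm_of_mem_unitary (det_of_mem_unitary hU)
  have hvdm : ‖det (vandermonde (RCLike.ofReal ∘ hA.eigenvalues : Fin k → 𝕜))‖ ^ 2
      = ∏ i, ∏ l ∈ Ioi i, (hA.eigenvalues i - hA.eigenvalues l) ^ 2 := by
    rw [det_vandermonde]
    simp only [Function.comp_apply, ← RCLike.ofReal_sub, norm_prod, RCLike.norm_ofReal,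
      ← prod_pow, sq_abs]
    exact prod_congr rfl fun i _ => prod_congr rfl fun l _ => by ring
  conv_lhs => rw [hspec]
  simp only [covariantCoeff_conj_diagonal (mem_unitaryGroup_iff'.mp hU), norm_mul, hdetU,
    one_mul, mul_pow]
  rw [← mul_sum, sum_norm_permanent_submatrix_sq (Unitary.star_mem hU), hvdm, Fintype.card_fin,
    mul_comm]

variable (𝕜 : Type*) [RCLike 𝕜]

/-- The weight is there because the `#{j | Sym.ofFn j = s}` tuples with multiset `s` all have
the same covariant coefficient. -/
noncomputable def discriminantSOSTerm (s : Sym (Fin k) k) : MvPolynomial (Fin k × Fin k) 𝕜 :=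
  MvPolynomial.C (√(#{j | Sym.ofFn j = s} / k.factorial : ℝ) : 𝕜) *
    covariantCoeff (mvPolynomialX (Fin k) (Fin k) 𝕜) (Function.surjInv Sym.ofFn_surjective s)

variable {𝕜}

theorem sum_norm_eval_discriminantSOSTerm_sq (A : Matrix (Fin k) (Fin k) 𝕜) :
    ∑ s, ‖MvPolynomial.eval (fun p => A p.1 p.2) (discriminantSOSTerm 𝕜 s)‖ ^ 2
      = (∑ j : Fin k → Fin k, ‖covariantCoeff A j‖ ^ 2) / k.factorial := by
  set r := Function.surjInv (Sym.ofFn_surjective (α := Fin k) (k := k))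
  have heval (s : Sym (Fin k) k) :
      ‖MvPolynomial.eval (fun p => A p.1 p.2) (discriminantSOSTerm 𝕜 s)‖ ^ 2
        = #{j | Sym.ofFn j = s} * ‖covariantCoeff A (r s)‖ ^ 2 / k.factorial := by
    rw [discriminantSOSTerm, map_mul, MvPolynomial.eval_C, eval_covariantCoeff_mvPolynomialX,
      norm_mul, mul_pow, RCLike.norm_ofReal, sq_abs, Real.sq_sqrt (by positivity),
      div_mul_eq_mul_div]
  have hfiber (j : Fin k → Fin k) : covariantCoeff A (r (Sym.ofFn j)) = covariantCoeff A j :=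
    covariantCoeff_eq_of_sym_ofFn_eq A (Function.surjInv_eq _ _)
  calc ∑ s, ‖MvPolynomial.eval (fun p => A p.1 p.2) (discriminantSOSTerm 𝕜 s)‖ ^ 2
      = (∑ s, #{j | Sym.ofFn j = s} * ‖covariantCoeff A (r s)‖ ^ 2) / k.factorial := by
        simp only [heval, sum_div]
    _ = (∑ j, ‖covariantCoeff A (r (Sym.ofFn j))‖ ^ 2) / k.factorial := by
        rw [← sum_fiberwise' univ Sym.ofFn (fun s => ‖covariantCoeff A (r s)‖ ^ 2)]
        simp [sum_const, nsmul_eq_mul]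
    _ = _ := by simp only [hfiber]

end Matrix

theorem stmt_16_general (n : ℕ) (N : ℕ) (hN : N = Nat.choose (2 * n - 1) (n - 1)) :
    ∃ q : Fin N → MvPolynomial (Fin n × Fin n) ℂ,
      ∀ A : Matrix (Fin n) (Fin n) ℂ, ∀ hA : A.IsHermitian,
        ∏ i : Fin n, ∏ j ∈ Finset.univ.filter (fun j => i < j),
          (hA.eigenvalues i - hA.eigenvalues j) ^ 2
        = ∑ m : Fin N, ‖MvPolynomial.eval (fun p => A p.1 p.2) (q m)‖ ^ 2 := by
  have hcard : Fintype.card (Sym (Fin n) n) = N := by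
    rw [Sym.card_sym_eq_choose, Fintype.card_fin, Nat.choose_add_self_sub_one, hN]
  let e := Fintype.equivFinOfCardEq hcard
  refine ⟨fun m => Matrix.discriminantSOSTerm ℂ (e.symm m), fun A hA => ?_⟩
  rw [e.symm.sum_comp (fun s => ‖MvPolynomial.eval _ (Matrix.discriminantSOSTerm ℂ s)‖ ^ 2),
    Matrix.sum_norm_eval_discriminantSOSTerm_sq, hA.sum_norm_covariantCoeff_sq,
    mul_div_cancel_left₀ _ (by positivity)]
  simp only [filter_lt_eq_Ioi]

/-- The discriminant of Hermitian `n×n` matrices is a sum of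
`2 · binom(2n-1, n-1)` squares: there are `N = binom(2n-1, n-1)` complex polynomial
functions whose squared absolute values sum to `∏_{i<j} (λᵢ - λⱼ)²` on Hermitian
matrices. -/
theorem stmt_16 (n : ℕ) (hn : 2 ≤ n) (N : ℕ) (hN : N = Nat.choose (2 * n - 1) (n - 1)) :
    ∃ q : Fin N → MvPolynomial (Fin n × Fin n) ℂ,
      ∀ A : Matrix (Fin n) (Fin n) ℂ, ∀ hA : A.IsHermitian,
        ∏ i : Fin n, ∏ j ∈ Finset.univ.filter (fun j => i < j),
          (hA.eigenvalues i - hA.eigenvalues j) ^ 2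
        = ∑ m : Fin N, ‖MvPolynomial.eval (fun p => A p.1 p.2) (q m)‖ ^ 2 :=
  stmt_16_general n N hN
end

section
/- Let n ≥ 2 and 1 ≤ k ≤ n−1. For A ∈ Matrix (Fin n) (Fin n) ℂ define f_k(A) ∈ ℂ as the determinant of the (n−k)×(n−k) matrix whose (r, c) entry, for 1 ≤ r, c ≤ n−k, is the (k+r, 1) entry of A^c (i.e. the submatrix of the n×(n−k) matrix with columns A·e₁, A²·e₁, …, A^{n−k}·e₁ consisting of rows k+1, …, n). Then f_k is invariant under conjugation by upper unitriangular matrices: for every upper triangular g ∈ Matrix (Fin n) (Fin n) ℂ with all diagonal entries equal to 1, f_k(g·A·g⁻¹) = f_k(A) for all A. -/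
/-!
Both sides are determinants of row blocks of Krylov matrices `(A e₁ | A² e₁ | ⋯)`.
An upper unitriangular `g` fixes `e₁`, so the Krylov matrix of `g A g⁻¹` at `e₁` is `g` times
that of `A`. Since `g` is upper triangular, the last `n - k` rows of `g B` are the last `n - k`
rows of `B` multiplied by the lower-right block of `g`, which is again unitriangular and so has
determinant `1`.
-/

open Function Set

namespace Matrix

variable {ι m o R : Type*} [CommRing R]

def krylov [Fintype ι] [DecidableEq ι] (A : Matrix ι ι R) (v : ι → R) (p : ℕ) :
    Matrix ι (Fin p) R :=
  of fun i c => (A ^ ((c : ℕ) + 1) *ᵥ v) i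

theorem krylov_conj [Fintype ι] [DecidableEq ι] {g : Matrix ι ι R} (hg : IsUnit g.det)
    (A : Matrix ι ι R) (v : ι → R) (p : ℕ) :
    krylov (g * A * g⁻¹) (g *ᵥ v) p = g * krylov A v p := by
  have hconj : SemiconjBy g A (g * A * g⁻¹) := (nonsing_inv_mul_cancel_right g (g * A) hg).symm
  ext i c
  rw [krylov, of_apply, mulVec_mulVec, ← (hconj.pow_right _).eq, ← mulVec_mulVec]
  simp only [mul_apply, mulVec, dotProduct, krylov, of_apply]

section LinearOrder

variable [LinearOrder ι] {g : Matrix ι ι R}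

theorem IsUpperTriangular.det_eq_one [Fintype ι] (hg : g.IsUpperTriangular)
    (h1 : ∀ i, g i i = 1) : g.det = 1 := by
  simp [det_of_isUpperTriangular hg, h1]

theorem IsUpperTriangular.submatrix_of_strictMono [LinearOrder m] (hg : g.IsUpperTriangular)
    {e : m → ι} (he : StrictMono e) : (g.submatrix e e).IsUpperTriangular :=
  fun _ _ h => hg (he h)

theorem IsUpperTriangular.mulVec_single_of_isBot [Fintype ι] [DecidableEq ι]
    (hg : g.IsUpperTriangular) {i₀ : ι} (hbot : IsBot i₀) (h1 : g i₀ i₀ = 1) :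
    g *ᵥ Pi.single i₀ 1 = Pi.single i₀ 1 := by
  ext i
  rw [mulVec_single_one, col_apply]
  rcases eq_or_ne i i₀ with rfl | hi
  · simp [h1]
  · simp [hi, hg ((hbot i).lt_of_ne' hi)]

theorem IsUpperTriangular.submatrix_mul [Fintype ι] [Fintype m] (hg : g.IsUpperTriangular)
    (B : Matrix ι o R) {e : m → ι} (he : Injective e) (hup : IsUpperSet (range e)) :
    (g * B).submatrix e id = g.submatrix e e * B.submatrix e id := by
  ext r c
  simp only [submatrix_apply, mul_apply, id]
  calc ∑ j, g (e r) j * B j c = ∑ j ∈ Finset.univ.map ⟨e, he⟩, g (e r) j * B j c := by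
        refine (Finset.sum_subset (Finset.subset_univ _) fun j _ hj => ?_).symm
        have hjr : j < e r := not_le.mp fun h => hj (by simpa using hup h (mem_range_self r))
        rw [hg hjr, zero_mul]
    _ = ∑ s, g (e r) (e s) * B (e s) c := Finset.sum_map _ _ _

theorem IsUpperTriangular.det_submatrix_mul [LinearOrder m] [Fintype ι] [Fintype m]
    (hg : g.IsUpperTriangular) (h1 : ∀ i, g i i = 1) (B : Matrix ι m R) {e : m → ι}
    (he : StrictMono e) (hup : IsUpperSet (range e)) :
    ((g * B).submatrix e id).det = (B.submatrix e id).det := by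
  rw [hg.submatrix_mul B he.injective hup, det_mul,
    (hg.submatrix_of_strictMono he).det_eq_one fun _ => h1 _, one_mul]

end LinearOrder

end Matrix

open Matrix

/-- Tange's highest weight vector `f_k` — the determinant of the submatrix of
`(A·e₁ | A²·e₁ | ⋯ | A^{n-k}·e₁)` consisting of the last `n-k` rows — is invariant
under conjugation by upper unitriangular matrices. -/
theorem stmt_18 (n k : ℕ) (hn : 2 ≤ n)
    (fk : Matrix (Fin n) (Fin n) ℂ → ℂ)
    (hfk : ∀ A : Matrix (Fin n) (Fin n) ℂ,
      fk A = Matrix.det (Matrix.of fun r c : Fin (n - k) =>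
        (A ^ ((c : ℕ) + 1))
          ⟨k + (r : ℕ), by have := r.isLt; omega⟩ ⟨0, by omega⟩)) :
    ∀ g : Matrix (Fin n) (Fin n) ℂ,
      (∀ i j : Fin n, j < i → g i j = 0) → (∀ i : Fin n, g i i = 1) →
      ∀ A : Matrix (Fin n) (Fin n) ℂ, fk (g * A * g⁻¹) = fk A := by
  intro g hg0 hg1 A
  have hg : g.IsUpperTriangular := fun i j h => hg0 i j h
  let e₀ : Fin n := ⟨0, by omega⟩
  let e : Fin (n - k) → Fin n := fun r => ⟨k + r, by have := r.isLt; omega⟩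
  have hfk' : ∀ B, fk B = ((krylov B (Pi.single e₀ 1) (n - k)).submatrix e id).det := by
    intro B
    rw [hfk]
    congr 1
    ext r c
    rw [of_apply, submatrix_apply, krylov, of_apply, mulVec_single_one]
    rfl
  have he : StrictMono e := fun r s h => Fin.lt_def.2 (Nat.add_lt_add_left (Fin.lt_def.1 h) k)
  have hup : IsUpperSet (range e) := by
    rintro _ j hj ⟨r, rfl⟩
    have hkj : k + r ≤ j := Fin.le_def.1 hj
    exact ⟨⟨j - k, by omega⟩, Fin.ext (show k + (j - k) = j by omega)⟩
  have hv : g *ᵥ Pi.single e₀ 1 = Pi.single e₀ 1 :=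
    hg.mulVec_single_of_isBot (fun j => Fin.le_def.2 (Nat.zero_le j)) (hg1 e₀)
  rw [hfk', hfk', ← hv, krylov_conj (by rw [hg.det_eq_one hg1]; exact isUnit_one),
    hg.det_submatrix_mul hg1 _ he hup, hv]
end

section
/- Let n ≥ 2 and 0 ≤ k ≤ n−2. If A ∈ Matrix (Fin n) (Fin n) ℂ is such that the family (A^0, A^1, …, A^{n−k−1}) is linearly dependent over ℂ (equivalently, the minimal polynomial of A has degree at most n−k−1), then the determinant of the (n−k−1)×(n−k−1) matrix whose (r, c) entry, for 1 ≤ r, c ≤ n−k−1, is the (k+1+r, 1) entry of A^c, equals 0. (That is, the highest weight vector f_{k+1}, of degree binom(n−k, 2), lies in the vanishing ideal of the variety of matrices with minimal polynomial of degree at most n−k−1.) -/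
/-!
A nontrivial relation `∑ gᵣ Aʳ = 0` among `1, A, …, A^m` rewrites as `∑_{c ≥ 1} g_c A^c = -g₀ • 1`,
where `(g₁, …, g_m) ≠ 0` since `1 ≠ 0`. The right-hand side is diagonal, so reading this identity
in any off-diagonal position `(ρ r, j)` shows that `(g₁, …, g_m)` lies in the kernel of the
`m × m` matrix with entries `(A^c)_{ρ r, j}`.
-/

open Matrix

theorem exists_ne_zero_sum_smul_pow_succ_eq_algebraMap {K A : Type*} [Field K] [Ring A]
    [Nontrivial A] [Algebra K A] {m : ℕ} {a : A}
    (ha : ¬ LinearIndependent K (fun r : Fin (m + 1) => a ^ (r : ℕ))) :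
    ∃ w : Fin m → K, w ≠ 0 ∧ ∃ t : K, ∑ c, w c • a ^ ((c : ℕ) + 1) = algebraMap K A t := by
  obtain ⟨g, hg, i, hi⟩ := Fintype.not_linearIndependent_iff.mp ha
  simp only [Fin.sum_univ_succ, Fin.val_zero, pow_zero, Fin.val_succ] at hg
  have hsum : ∑ c : Fin m, g c.succ • a ^ ((c : ℕ) + 1) = algebraMap K A (-g 0) := by
    rw [map_neg, Algebra.algebraMap_eq_smul_one, eq_neg_iff_add_eq_zero, add_comm, hg]
  refine ⟨fun c => g c.succ, fun hw => hi ?_, -g 0, hsum⟩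
  have hg0 : g 0 = 0 := by
    have hw' : ∀ c : Fin m, g c.succ = 0 := fun c => congrFun hw c
    have h := hsum
    simp only [hw', zero_smul, Finset.sum_const_zero] at h
    exact neg_eq_zero.mp ((algebraMap K A).injective (by rw [← h, map_zero]))
  cases i using Fin.cases with
  | zero => exact hg0
  | succ c => exact congrFun hw c

theorem det_of_pow_succ_apply_eq_zero {K ι : Type*} [Field K] [Fintype ι] [DecidableEq ι]
    {m : ℕ} {A : Matrix ι ι K}
    (hA : ¬ LinearIndependent K (fun r : Fin (m + 1) => A ^ (r : ℕ)))
    (ρ : Fin m → ι) (j : ι) (hρ : ∀ r, ρ r ≠ j) :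
    det (of fun r c : Fin m => (A ^ ((c : ℕ) + 1)) (ρ r) j) = 0 := by
  have : Nonempty ι := ⟨j⟩
  obtain ⟨w, hw, t, hsum⟩ := exists_ne_zero_sum_smul_pow_succ_eq_algebraMap hA
  refine exists_mulVec_eq_zero_iff.mp ⟨w, hw, funext fun r => ?_⟩
  have hentry := congrFun (congrFun hsum (ρ r)) j
  rw [Matrix.sum_apply, algebraMap_matrix_apply, if_neg (hρ r)] at hentry
  simpa [mulVec, dotProduct, mul_comm] using hentry

/-- If the powers `A^0, A^1, …, A^{n-k-1}` of `A ∈ ℂ^{n×n}` are linearly dependent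
(i.e. the minimal polynomial of `A` has degree at most `n-k-1`), then the highest
weight vector `f_{k+1}` vanishes at `A`: the determinant of the submatrix of
`(A·e₁ | ⋯ | A^{n-k-1}·e₁)` consisting of the last `n-k-1` rows is zero. -/
theorem stmt_19 (n k : ℕ) (hn : 2 ≤ n) (hk : k ≤ n - 2)
    (A : Matrix (Fin n) (Fin n) ℂ)
    (hA : ¬ LinearIndependent ℂ (fun r : Fin (n - k) => A ^ (r : ℕ))) :
    Matrix.det (Matrix.of fun r c : Fin (n - k - 1) =>
      (A ^ ((c : ℕ) + 1))
        ⟨k + 1 + (r : ℕ), by have := r.isLt; omega⟩ ⟨0, by omega⟩) = 0 := by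
  have hA' : ¬ LinearIndependent ℂ (fun r : Fin (n - k - 1 + 1) => A ^ (r : ℕ)) :=
    mt (linearIndependent_equiv (finCongr (by omega : n - k = n - k - 1 + 1))).mpr hA
  exact det_of_pow_succ_apply_eq_zero hA' _ _ fun r => by simp [Fin.ext_iff]
end
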